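/- arXiv:2511.02138 — 5 statements merged into one kernel-verified Lean document; each statement's English description precedes it below -/
import Mathlib

section
/- Let G be as described. Then, inside the closed subspace {f ∈ ℓ²(E) : ∂f = 0} of ℓ²(E), the orthogonal complement of ℓ²_{0,c}(E) is exactly the set {du : u : V → ℝ, ∂(du) = 0, du ∈ ℓ²(E)}, where du is the 1-cochain du(e) = u(end(e)) − u(beg(e)). Equivalently, every f ∈ ℓ²(E) with ∂f = 0 decomposes (orthogonally and uniquely) as f = f₀ + du with f₀ ∈ ℓ²_{0,c}(E), du ∈ ℓ²(E), ∂(du) = 0, and ⟨f₀, du⟩_{ℓ²(E)} = 0. -/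
/-- A graph on `V` given by a set of oriented edges: a set `E` of ordered pairs
containing no loops and at most one orientation of each edge.  This encodes a simple
graph together with a chosen orientation of each of its edges. -/
structure OriGraph (V : Type*) where
  /-- the set of oriented edges -/
  E : Set (V × V)
  ne : ∀ p ∈ E, p.1 ≠ p.2
  antisymm : ∀ p ∈ E, p.swap ∉ E

namespace OriGraph

variable {V : Type*} (O : OriGraph V)

/-- The underlying simple graph: `u` and `v` are adjacent iff one of the two oriented
pairs is an edge. -/
def G : SimpleGraph V where
  Adj u v := (u, v) ∈ O.E ∨ (v, u) ∈ O.E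
  symm := ⟨fun u v h => h.symm⟩
  loopless := by
    constructor
    intro u h
    rcases h with h | h
    · exact O.ne _ h rfl
    · exact O.ne _ h rfl

/-- All vertex degrees of the underlying graph are bounded by some finite constant. -/
def BddDegree : Prop :=
  ∃ N : ℕ, ∀ v : V, (O.G.neighborSet v).Finite ∧ (O.G.neighborSet v).ncard ≤ N

/-- The boundary of a 1-cochain:
`∂f(v) = Σ_{e : end(e) = v} f(e) − Σ_{e : beg(e) = v} f(e)`. -/
noncomputable def bdry (f : ↥O.E → ℝ) (v : V) : ℝ :=
  (∑' e : {e : ↥O.E // (e : V × V).2 = v}, f e.1) -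
    (∑' e : {e : ↥O.E // (e : V × V).1 = v}, f e.1)

/-- `f` is a finitely supported closed 1-cochain. -/
noncomputable def FinClosed (f : ↥O.E → ℝ) : Prop :=
  (Function.support f).Finite ∧ ∀ v, O.bdry f v = 0

/-- Membership in `ℓ²_{0,c}(E)`: `g` is an ℓ²-limit of finitely supported closed
1-cochains. -/
noncomputable def MemL2oc (g : ↥O.E → ℝ) : Prop :=
  ∃ F : ℕ → ↥O.E → ℝ, (∀ k, O.FinClosed (F k)) ∧
    (∀ k, Summable fun e => (g e - F k e) ^ 2) ∧
    Filter.Tendsto (fun k => ∑' e, (g e - F k e) ^ 2) Filter.atTop (nhds 0)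

/-- The signed value of the 1-cochain `f` on the oriented step from `u` to `v`:
`f(e)` if `e = (u,v)` is an oriented edge, `−f(e)` if `e = (v,u)` is one, `0` otherwise. -/
noncomputable def stepVal (f : ↥O.E → ℝ) (u v : V) : ℝ :=
  (∑' e : {e : ↥O.E // (e : V × V) = (u, v)}, f e.1) -
    (∑' e : {e : ↥O.E // (e : V × V) = (v, u)}, f e.1)

/-- The signed sum of a 1-cochain `f` along a walk of the underlying graph. -/
noncomputable def walkSum (f : ↥O.E → ℝ) {u v : V} (w : O.G.Walk u v) : ℝ :=
  (w.darts.map (fun d => O.stepVal f d.toProd.1 d.toProd.2)).sum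

/-- A set of (unoriented) edges is a face of parameter `D` if it is the edge set of some
cycle of the underlying graph of length at most `D`.  A cycle is determined, up to
rotation and reversal, by its edge set. -/
def IsFaceSet (D : ℕ) (c : Set (Sym2 V)) : Prop :=
  ∃ (v : V) (w : O.G.Walk v v), w.IsCycle ∧ w.length ≤ D ∧ {e | e ∈ w.edges} = c

/-- The type of faces of parameter `D`. -/
def Face (D : ℕ) : Type _ := {c : Set (Sym2 V) // O.IsFaceSet D c}

/-- `(df)(c)`: the signed sum of a 1-cochain `f` along a traversal of the face `c`
(a chosen orientation of the face). -/
noncomputable def faceVal (D : ℕ) (f : ↥O.E → ℝ) (c : O.Face D) : ℝ :=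
  O.walkSum f c.2.choose_spec.choose

/-- `G` has a coexact 1-Laplacian spectral gap for `D`: there is `ε > 0` with
`ε·Σ_e f(e)² ≤ Σ_{c face} ((df)(c))²` for every finitely supported closed 1-cochain. -/
noncomputable def HasGap (D : ℕ) : Prop :=
  ∃ ε : ℝ, 0 < ε ∧ ∀ f : ↥O.E → ℝ, (Function.support f).Finite →
    (∀ v, O.bdry f v = 0) →
    ε * ∑' e : ↥O.E, f e ^ 2 ≤ ∑' c : O.Face D, O.faceVal D f c ^ 2

end OriGraph

/-!
Let `K ⊆ ℓ²(E)` be the closure of the finitely supported closed cochains, so that `MemL2oc`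
is membership in `K`. Summation by parts gives `⟨f, du⟩ = Σ_v u(v) ∂f(v) = 0` for finitely
supported closed `f`. Conversely, the cochain of a closed walk is finitely supported and closed,
so a cochain orthogonal to all of them sums to zero around every closed walk, and is `du` for
`u(v)` its sum along a walk to a base point. Hence `Kᗮ` consists exactly of the square-summable
gradients. Bounded degree makes `x ↦ ∂x(v)` a finite sum of coordinates, hence continuous on
`ℓ²(E)`, so the elements of `K` are closed. Decomposing a closed `f` as `f₀ + du` along
`ℓ²(E) = K ⊕ Kᗮ`, the part `du = f - f₀` is closed too, and the decomposition is unique.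
-/

open Filter Topology

section RealL2

variable {ι : Type*}

theorem memℓp_two_iff_summable_sq {f : ι → ℝ} : Memℓp f 2 ↔ Summable fun i => f i ^ 2 := by
  rw [memℓp_gen_iff (by norm_num)]
  simp

theorem memℓp_two_of_finite_support {f : ι → ℝ} (hf : f.support.Finite) : Memℓp f 2 :=
  (memℓp_zero hf).of_exponent_ge (by norm_num)

namespace lp

theorem real_inner_eq_tsum (x y : lp (fun _ : ι => ℝ) 2) : inner ℝ x y = ∑' i, x i * y i := by
  simp [inner_eq_tsum, mul_comm]

theorem norm_sq_eq_tsum (x : lp (fun _ : ι => ℝ) 2) : ‖x‖ ^ 2 = ∑' i, x i ^ 2 := by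
  rw [← real_inner_self_eq_norm_sq, real_inner_eq_tsum]
  simp [sq]

theorem tendsto_iff_tsum_sq_sub {x : lp (fun _ : ι => ℝ) 2} {y : ℕ → lp (fun _ : ι => ℝ) 2} :
    Tendsto y atTop (𝓝 x) ↔ Tendsto (fun k => ∑' i, (x i - y k i) ^ 2) atTop (𝓝 0) := by
  have hnorm : ∀ k, ∑' i, (x i - y k i) ^ 2 = ‖x - y k‖ ^ 2 := fun k => by
    simp [norm_sq_eq_tsum]
  simp only [hnorm, tendsto_iff_norm_sub_tendsto_zero (f := y), norm_sub_rev (y _)]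
  exact ⟨fun h => by simpa using h.pow 2, fun h => by simpa using h.sqrt⟩

end lp

end RealL2

theorem tsum_subtype_eq_sum_filter {α M : Type*} [AddCommMonoid M] [TopologicalSpace M]
    {P : α → Prop} [DecidablePred P] {f : α → M} {S : Finset α}
    (hS : ∀ a, P a → f a ≠ 0 → a ∈ S) : ∑' a : {a // P a}, f a = ∑ a ∈ S with P a, f a := by
  rw [show (∑' a : {a // P a}, f a) = ∑' a : {a | P a}, f a from rfl, tsum_subtype,
    Finset.sum_filter, tsum_eq_sum (s := S)]
  · simp [Set.indicator_apply]
  · intro a ha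
    by_contra h
    simp only [Set.indicator_apply, Set.mem_ofPred_eq] at h
    split_ifs at h with hP
    exacts [ha (hS a hP h), h rfl]

namespace OriGraph

variable {V : Type*} (O : OriGraph V)

open Classical

theorem bdry_eq_sum_filter {f : ↥O.E → ℝ} {S : Finset ↥O.E} {v : V}
    (hS : ∀ e : ↥O.E, (e.1.2 = v ∨ e.1.1 = v) → f e ≠ 0 → e ∈ S) :
    O.bdry f v = ∑ e ∈ S with e.1.2 = v, f e - ∑ e ∈ S with e.1.1 = v, f e := by
  rw [bdry, tsum_subtype_eq_sum_filter fun e he => hS e (.inl he),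
    tsum_subtype_eq_sum_filter fun e he => hS e (.inr he)]

theorem bdry_smul (c : ℝ) (f : ↥O.E → ℝ) (v : V) : O.bdry (c • f) v = c * O.bdry f v := by
  simp only [bdry, Pi.smul_apply, smul_eq_mul, tsum_mul_left, mul_sub]

theorem bdry_neg (f : ↥O.E → ℝ) (v : V) : O.bdry (-f) v = -O.bdry f v := by
  simp only [bdry, Pi.neg_apply, tsum_neg]
  ring

theorem bdry_add_of_finite_support {f g : ↥O.E → ℝ} (hf : f.support.Finite)
    (hg : g.support.Finite) (v : V) : O.bdry (f + g) v = O.bdry f v + O.bdry g v := by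
  have hS : ∀ h : ↥O.E → ℝ, h.support ⊆ f.support ∪ g.support →
      O.bdry h v = ∑ e ∈ hf.toFinset ∪ hg.toFinset with e.1.2 = v, h e -
        ∑ e ∈ hf.toFinset ∪ hg.toFinset with e.1.1 = v, h e := fun h hh =>
    O.bdry_eq_sum_filter fun e _ he => by simpa using hh he
  rw [hS (f + g) (Function.support_add f g), hS f Set.subset_union_left,
    hS g Set.subset_union_right]
  simp only [Pi.add_apply, Finset.sum_add_distrib]
  ring

theorem bdry_single (e₀ : ↥O.E) (c : ℝ) (v : V) :
    O.bdry (Pi.single e₀ c) v = (if e₀.1.2 = v then c else 0) - (if e₀.1.1 = v then c else 0) := by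
  rw [O.bdry_eq_sum_filter (S := {e₀}) fun e _ he => by simpa using Pi.support_single_subset he]
  simp only [Finset.sum_filter, Finset.sum_singleton, Pi.single_eq_same]

theorem finite_setOf_incident (hfin : ∀ v, (O.G.neighborSet v).Finite) (v : V) :
    {e : ↥O.E | e.1.2 = v ∨ e.1.1 = v}.Finite := by
  refine (((hfin v).image fun w => (w, v)).union ((hfin v).image fun w => (v, w))).preimage
    Subtype.val_injective.injOn |>.subset ?_
  rintro ⟨⟨a, b⟩, he⟩ (rfl | rfl)
  · exact .inl ⟨a, .inr he, rfl⟩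
  · exact .inr ⟨b, .inl he, rfl⟩

theorem bdry_sub_of_locallyFinite (hfin : ∀ v, (O.G.neighborSet v).Finite) (f g : ↥O.E → ℝ)
    (v : V) : O.bdry (f - g) v = O.bdry f v - O.bdry g v := by
  have hS := O.finite_setOf_incident hfin v
  simp only [O.bdry_eq_sum_filter (S := hS.toFinset) fun e he _ => hS.mem_toFinset.2 he,
    Pi.sub_apply, Finset.sum_sub_distrib]
  ring

theorem continuous_bdry (hfin : ∀ v, (O.G.neighborSet v).Finite) (v : V) :
    Continuous fun x : lp (fun _ : ↥O.E => ℝ) 2 => O.bdry x v := by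
  have hS := O.finite_setOf_incident hfin v
  have hcoord : ∀ e, Continuous fun x : lp (fun _ : ↥O.E => ℝ) 2 => x e := fun e =>
    (continuous_apply e).comp lp.uniformContinuous_coe.continuous
  simp only [O.bdry_eq_sum_filter (S := hS.toFinset) fun e he _ => hS.mem_toFinset.2 he]
  exact (continuous_finsetSum _ fun e _ => hcoord e).sub
    (continuous_finsetSum _ fun e _ => hcoord e)

theorem tsum_mul_sub_eq_zero_of_finClosed {f : ↥O.E → ℝ} (hf : O.FinClosed f) (u : V → ℝ) :
    ∑' e : ↥O.E, f e * (u e.1.2 - u e.1.1) = 0 := by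
  obtain ⟨hsupp, hclosed⟩ := hf
  set S := hsupp.toFinset
  set T : Finset V := S.image (fun e => e.1.2) ∪ S.image (fun e => e.1.1)
  have hfiber : ∀ π : ↥O.E → V, (∀ e ∈ S, π e ∈ T) →
      ∑ e ∈ S, f e * u (π e) = ∑ v ∈ T, (∑ e ∈ S with π e = v, f e) * u v := by
    intro π hπ
    rw [← Finset.sum_fiberwise_of_maps_to hπ]
    refine Finset.sum_congr rfl fun v _ => ?_
    rw [Finset.sum_mul]
    exact Finset.sum_congr rfl fun e he => by rw [(Finset.mem_filter.1 he).2]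
  have hbdry : ∀ v, O.bdry f v = ∑ e ∈ S with e.1.2 = v, f e - ∑ e ∈ S with e.1.1 = v, f e :=
    fun v => O.bdry_eq_sum_filter fun e _ he => hsupp.mem_toFinset.2 he
  calc ∑' e, f e * (u e.1.2 - u e.1.1)
      = ∑ e ∈ S, f e * u e.1.2 - ∑ e ∈ S, f e * u e.1.1 := by
        rw [tsum_eq_sum (s := S) fun e he => by
          rw [Function.notMem_support.1 (mt hsupp.mem_toFinset.2 he), zero_mul],
          ← Finset.sum_sub_distrib]
        simp only [mul_sub]
    _ = ∑ v ∈ T, O.bdry f v * u v := by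
        rw [hfiber _ fun e he => Finset.mem_union_left _ (Finset.mem_image_of_mem _ he),
          hfiber _ fun e he => Finset.mem_union_right _ (Finset.mem_image_of_mem _ he),
          ← Finset.sum_sub_distrib]
        simp only [hbdry, sub_mul]
    _ = 0 := by simp [hclosed]

noncomputable def dartCochain (d : O.G.Dart) : ↥O.E → ℝ :=
  if h : d.toProd ∈ O.E then Pi.single ⟨d.toProd, h⟩ 1
  else -Pi.single ⟨d.toProd.swap, d.adj.resolve_left h⟩ 1

theorem finite_support_dartCochain (d : O.G.Dart) : (O.dartCochain d).support.Finite := by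
  unfold dartCochain
  split
  · exact (Set.finite_singleton _).subset Pi.support_single_subset
  · rw [Function.support_neg]
    exact (Set.finite_singleton _).subset Pi.support_single_subset

theorem bdry_dartCochain (d : O.G.Dart) (v : V) :
    O.bdry (O.dartCochain d) v = (if d.snd = v then 1 else 0) - (if d.fst = v then 1 else 0) := by
  by_cases h : d.toProd ∈ O.E
  · rw [dartCochain, dif_pos h, O.bdry_single]
  · rw [dartCochain, dif_neg h, O.bdry_neg, O.bdry_single]
    simp only [Prod.fst_swap, Prod.snd_swap]
    ring

theorem tsum_dartCochain_mul {d : O.G.Dart} (h : d.toProd ∈ O.E) (g : ↥O.E → ℝ) :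
    ∑' e, O.dartCochain d e * g e = g ⟨d.toProd, h⟩ := by
  rw [dartCochain, dif_pos h, tsum_eq_single ⟨d.toProd, h⟩ fun e he => by simp [he]]
  simp

noncomputable def walkCochain {a b : V} (p : O.G.Walk a b) : ↥O.E → ℝ :=
  (p.darts.map O.dartCochain).sum

theorem walkCochain_cons {a b c : V} (h : O.G.Adj a b) (p : O.G.Walk b c) :
    O.walkCochain (.cons h p) = O.dartCochain ⟨(a, b), h⟩ + O.walkCochain p := by
  simp [walkCochain]

theorem finite_support_walkCochain {a b : V} (p : O.G.Walk a b) :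
    (O.walkCochain p).support.Finite := by
  induction p with
  | nil => simp [walkCochain]
  | cons h p ih =>
    rw [walkCochain_cons]
    exact ((O.finite_support_dartCochain _).union ih).subset (Function.support_add _ _)

theorem bdry_walkCochain {a b : V} (p : O.G.Walk a b) (v : V) :
    O.bdry (O.walkCochain p) v = (if b = v then 1 else 0) - (if a = v then 1 else 0) := by
  induction p with
  | nil => simp [walkCochain, bdry]
  | cons h p ih =>
    rw [walkCochain_cons, O.bdry_add_of_finite_support (O.finite_support_dartCochain _)
      (O.finite_support_walkCochain p), bdry_dartCochain, ih]
    ring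

def IsGradient (g : ↥O.E → ℝ) : Prop :=
  ∃ u : V → ℝ, ∀ e : ↥O.E, g e = u e.1.2 - u e.1.1

theorem isGradient_of_forall_finClosed (hconn : O.G.Preconnected) {g : ↥O.E → ℝ}
    (hg : ∀ f, O.FinClosed f → ∑' e, f e * g e = 0) : O.IsGradient g := by
  rcases isEmpty_or_nonempty V with hV | ⟨⟨v₀⟩⟩
  · exact ⟨0, fun e => (hV.false e.1.1).elim⟩
  let q : ∀ v, O.G.Walk v v₀ := fun v => (hconn v v₀).some
  have hsum : ∀ {f : ↥O.E → ℝ}, f.support.Finite → Summable fun e => f e * g e := fun hf =>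
    summable_of_hasFiniteSupport (hf.subset (Function.support_mul_subset_left _ _))
  -- the walks `a → b ⇝ v₀` and `a ⇝ v₀` differ by a finitely supported closed cochain
  refine ⟨fun v => -∑' e, O.walkCochain (q v) e * g e, fun ⟨(a, b), hab⟩ => ?_⟩
  have hadj : O.G.Adj a b := .inl hab
  have hfin := O.finite_support_walkCochain (.cons hadj (q b))
  have hclosed : O.FinClosed (O.walkCochain (.cons hadj (q b)) - O.walkCochain (q a)) := by
    refine ⟨(hfin.union (O.finite_support_walkCochain (q a))).subset (Function.support_sub _ _),
      fun v => ?_⟩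
    rw [sub_eq_add_neg, O.bdry_add_of_finite_support hfin
      ((O.finite_support_walkCochain _).subset (Function.support_neg _).le), O.bdry_neg,
      bdry_walkCochain, bdry_walkCochain]
    ring
  have h := hg _ hclosed
  simp only [walkCochain_cons, Pi.sub_apply, Pi.add_apply, sub_mul, add_mul] at h
  rw [Summable.tsum_sub ((hsum (O.finite_support_dartCochain _)).add
      (hsum (O.finite_support_walkCochain _))) (hsum (O.finite_support_walkCochain _)),
    Summable.tsum_add (hsum (O.finite_support_dartCochain _))
      (hsum (O.finite_support_walkCochain _)), tsum_dartCochain_mul O hab] at h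
  dsimp only
  linarith

def finClosedSubmodule : Submodule ℝ (lp (fun _ : ↥O.E => ℝ) 2) where
  carrier := {x | O.FinClosed x}
  zero_mem' := by
    rw [Set.mem_ofPred_eq, lp.coeFn_zero]
    exact ⟨by simp, fun v => by simpa using O.bdry_smul 0 0 v⟩
  add_mem' {x y} hx hy := ⟨(hx.1.union hy.1).subset (Function.support_add x y), fun v => by
    rw [lp.coeFn_add, O.bdry_add_of_finite_support hx.1 hy.1, hx.2, hy.2, add_zero]⟩
  smul_mem' c x hx := ⟨hx.1.subset (Function.support_const_smul_subset c x), fun v => by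
    rw [lp.coeFn_smul, O.bdry_smul, hx.2, mul_zero]⟩

theorem memL2oc_iff {g : ↥O.E → ℝ} :
    O.MemL2oc g ↔ ∃ x ∈ O.finClosedSubmodule.topologicalClosure, ⇑x = g := by
  constructor
  · rintro ⟨F, hF, hsq, hlim⟩
    let y : ℕ → lp (fun _ : ↥O.E => ℝ) 2 := fun k => ⟨F k, memℓp_two_of_finite_support (hF k).1⟩
    have hg : Memℓp g 2 := by
      convert (memℓp_two_iff_summable_sq.2 (hsq 0)).add (y 0).2 using 1
      ext e
      simp [y]
    have hy : ∀ k, y k ∈ O.finClosedSubmodule := hF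
    have hlim' : Tendsto y atTop (𝓝 ⟨g, hg⟩) := lp.tendsto_iff_tsum_sq_sub.2 hlim
    refine ⟨⟨g, hg⟩, ?_, rfl⟩
    rw [← SetLike.mem_coe, Submodule.topologicalClosure_coe]
    exact mem_closure_of_tendsto hlim' (Eventually.of_forall hy)
  · rintro ⟨x, hx, rfl⟩
    obtain ⟨y, hy, hlim⟩ := mem_closure_iff_seq_limit.1 hx
    exact ⟨fun k => y k, hy, fun k => memℓp_two_iff_summable_sq.1 (x - y k).2,
      lp.tendsto_iff_tsum_sq_sub.1 hlim⟩

theorem bdry_eq_zero_of_mem_closure (hfin : ∀ v, (O.G.neighborSet v).Finite)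
    {x : lp (fun _ : ↥O.E => ℝ) 2} (hx : x ∈ O.finClosedSubmodule.topologicalClosure) (v : V) :
    O.bdry x v = 0 :=
  closure_minimal (fun _ hy => hy.2 v) (isClosed_eq (O.continuous_bdry hfin v) continuous_const) hx

theorem mem_orthogonal_closure_iff_isGradient (hconn : O.G.Preconnected)
    (z : lp (fun _ : ↥O.E => ℝ) 2) :
    z ∈ O.finClosedSubmodule.topologicalClosureᗮ ↔ O.IsGradient z := by
  rw [Submodule.orthogonal_closure, Submodule.mem_orthogonal]
  constructor
  · intro hz
    refine O.isGradient_of_forall_finClosed hconn fun f hf => ?_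
    rw [← lp.real_inner_eq_tsum ⟨f, memℓp_two_of_finite_support hf.1⟩ z]
    exact hz _ hf
  · rintro ⟨u, hu⟩ x hx
    simp only [lp.real_inner_eq_tsum, hu]
    exact O.tsum_mul_sub_eq_zero_of_finClosed hx u

theorem forall_memL2oc_tsum_mul_eq_zero_iff (hconn : O.G.Preconnected) {g : ↥O.E → ℝ}
    (hg : Summable fun e => g e ^ 2) :
    (∀ f, O.MemL2oc f → ∑' e, f e * g e = 0) ↔ O.IsGradient g := by
  let z : lp (fun _ : ↥O.E => ℝ) 2 := ⟨g, memℓp_two_iff_summable_sq.2 hg⟩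
  rw [show O.IsGradient g ↔ O.IsGradient z from Iff.rfl,
    ← O.mem_orthogonal_closure_iff_isGradient hconn, Submodule.mem_orthogonal]
  simp only [memL2oc_iff, lp.real_inner_eq_tsum]
  exact ⟨fun h x hx => h x ⟨x, hx, rfl⟩, fun h _ ⟨x, hx, hxf⟩ => hxf ▸ h x hx⟩

theorem existsUnique_decomposition (hconn : O.G.Preconnected)
    (hfin : ∀ v, (O.G.neighborSet v).Finite) {f : ↥O.E → ℝ} (hf : Summable fun e => f e ^ 2)
    (hc : ∀ v, O.bdry f v = 0) :
    ∃! p : (↥O.E → ℝ) × (↥O.E → ℝ), f = p.1 + p.2 ∧ O.MemL2oc p.1 ∧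
      Summable (fun e => p.2 e ^ 2) ∧ (∀ v, O.bdry p.2 v = 0) ∧ O.IsGradient p.2 ∧
      ∑' e, p.1 e * p.2 e = 0 := by
  set K := O.finClosedSubmodule.topologicalClosure
  let x : lp (fun _ : ↥O.E => ℝ) 2 := ⟨f, memℓp_two_iff_summable_sq.2 hf⟩
  obtain ⟨y, hy, z, hz, hxyz⟩ := K.exists_add_mem_mem_orthogonal x
  have hfyz : f = ⇑y + ⇑z := congrArg (⇑) hxyz
  refine ⟨(⇑y, ⇑z), ⟨hfyz, O.memL2oc_iff.2 ⟨y, hy, rfl⟩, memℓp_two_iff_summable_sq.1 z.2,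
    fun v => ?_, (O.mem_orthogonal_closure_iff_isGradient hconn z).1 hz, ?_⟩, ?_⟩
  · rw [eq_sub_of_add_eq' hfyz.symm, O.bdry_sub_of_locallyFinite hfin, hc,
      O.bdry_eq_zero_of_mem_closure hfin hy, sub_zero]
  · rw [← lp.real_inner_eq_tsum]
    exact Submodule.inner_right_of_mem_orthogonal hy hz
  · rintro ⟨_, q⟩ ⟨hq, hq₁, hq₂, -, hgrad, -⟩
    obtain ⟨y', hy', rfl⟩ := O.memL2oc_iff.1 hq₁
    let z' : lp (fun _ : ↥O.E => ℝ) 2 := ⟨q, memℓp_two_iff_summable_sq.2 hq₂⟩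
    have hz' : z' ∈ Kᗮ := (O.mem_orthogonal_closure_iff_isGradient hconn z').2 hgrad
    have hx' : x = y' + z' := lp.ext hq
    have hyy : y' = y := by
      rw [← K.eq_starProjection_of_mem_orthogonal' hy hz hxyz,
        K.eq_starProjection_of_mem_orthogonal' hy' hz' hx']
    have hzz : z' = z := add_left_cancel (hyy ▸ hx'.symm.trans hxyz)
    rw [← hyy, ← hzz]

end OriGraph


theorem coexact_stmt_2_general {V : Type*} (O : OriGraph V)
    (hconn : O.G.Connected) (hdeg : O.BddDegree) :
    ({g : ↥O.E → ℝ | Summable (fun e => g e ^ 2) ∧ (∀ v, O.bdry g v = 0) ∧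
        ∀ f : ↥O.E → ℝ, O.MemL2oc f → ∑' e, f e * g e = 0} =
      {g : ↥O.E → ℝ | Summable (fun e => g e ^ 2) ∧ (∀ v, O.bdry g v = 0) ∧
        ∃ u : V → ℝ, ∀ e : ↥O.E, g e = u (e : V × V).2 - u (e : V × V).1}) ∧
    ∀ f : ↥O.E → ℝ, Summable (fun e => f e ^ 2) → (∀ v, O.bdry f v = 0) →
      ∃! p : (↥O.E → ℝ) × (↥O.E → ℝ), f = p.1 + p.2 ∧ O.MemL2oc p.1 ∧
        Summable (fun e => p.2 e ^ 2) ∧ (∀ v, O.bdry p.2 v = 0) ∧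
        (∃ u : V → ℝ, ∀ e : ↥O.E, p.2 e = u (e : V × V).2 - u (e : V × V).1) ∧
        ∑' e, p.1 e * p.2 e = 0 := by
  obtain ⟨N, hN⟩ := hdeg
  refine ⟨Set.ext fun g => ?_, fun f hf hc =>
    O.existsUnique_decomposition hconn.preconnected (fun v => (hN v).1) hf hc⟩
  exact and_congr_right fun hg => and_congr_right fun _ =>
    O.forall_memL2oc_tsum_mul_eq_zero_iff hconn.preconnected hg

/-- **Hodge-type decomposition.**  Inside the closed 1-cochains of `ℓ²(E)`,
the orthogonal complement of `ℓ²_{0,c}(E)` is exactly the set of square-summable closed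
cochains of the form `du(e) = u(end e) − u(beg e)`; equivalently, every square-summable
closed 1-cochain decomposes orthogonally and uniquely as `f = f₀ + du` with
`f₀ ∈ ℓ²_{0,c}(E)` and `du` closed. -/
theorem coexact_stmt_2 {V : Type*} [Countable V] (O : OriGraph V)
    (hconn : O.G.Connected) (hdeg : O.BddDegree) :
    ({g : ↥O.E → ℝ | Summable (fun e => g e ^ 2) ∧ (∀ v, O.bdry g v = 0) ∧
        ∀ f : ↥O.E → ℝ, O.MemL2oc f → ∑' e, f e * g e = 0} =
      {g : ↥O.E → ℝ | Summable (fun e => g e ^ 2) ∧ (∀ v, O.bdry g v = 0) ∧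
        ∃ u : V → ℝ, ∀ e : ↥O.E, g e = u (e : V × V).2 - u (e : V × V).1}) ∧
    ∀ f : ↥O.E → ℝ, Summable (fun e => f e ^ 2) → (∀ v, O.bdry f v = 0) →
      ∃! p : (↥O.E → ℝ) × (↥O.E → ℝ), f = p.1 + p.2 ∧ O.MemL2oc p.1 ∧
        Summable (fun e => p.2 e ^ 2) ∧ (∀ v, O.bdry p.2 v = 0) ∧
        (∃ u : V → ℝ, ∀ e : ↥O.E, p.2 e = u (e : V × V).2 - u (e : V × V).1) ∧
        ∑' e, p.1 e * p.2 e = 0 :=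
  coexact_stmt_2_general O hconn hdeg
end

section
/- Let Γ, S be as described, let D ≥ 1 be an integer, and let C > 20 and x ≥ 1 be real numbers. Let a, b, c ∈ Γ, let w be a geodesic walk from a to b, and let u be a geodesic walk from b to c; assume dist(a,b) ≤ dist(a,p) for every vertex p of u (i.e. [a,b] is a perpendicular to the geodesic segment [b,c]). Let a₁ be a vertex of w with dist(a₁,c) ≤ dist(p,c) for every vertex p of w (a point of [a,b] closest to c). If dist(a₁,b) > 2·C·D·x, then there exist an integer L > 2·D·C·x and an injective cyclic path γ : ZMod L → Γ of length L such that for all t₁, t₂ ∈ ZMod L, dist(γ(t₁), γ(t₂)) ≤ x implies dist_{ZMod L}(t₁, t₂) ≤ C·x. -/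
/-- The Cayley graph of a group `Γ` with respect to a finite generating set `S`:
distinct `g, h` are adjacent iff `g⁻¹ * h ∈ S ∪ S⁻¹`. -/
def cayley {Γ : Type*} [Group Γ] (S : Finset Γ) : SimpleGraph Γ where
  Adj g h := g ≠ h ∧ (g⁻¹ * h ∈ S ∨ h⁻¹ * g ∈ S)
  symm := by constructor; rintro g h ⟨hne, hmem⟩; exact ⟨hne.symm, hmem.symm⟩
  loopless := by constructor; rintro g ⟨hne, _⟩; exact hne rfl

/-- A cyclic path of length `L` in `Cay(Γ,S)`: a map `γ : ZMod L → Γ` such that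
consecutive values differ by a generator or an inverse of a generator. -/
def IsCyclicPath {Γ : Type*} [Group Γ] (S : Finset Γ) (L : ℕ) (γ : ZMod L → Γ) : Prop :=
  ∀ t : ZMod L, (γ t)⁻¹ * γ (t + 1) ∈ (S : Set Γ) ∪ ((S : Set Γ))⁻¹

/-- The cyclic distance on `ZMod L`: the least `|k|` over integers `k` with `t₂ = t₁ + k`. -/
noncomputable def zdist (L : ℕ) (t₁ t₂ : ZMod L) : ℕ :=
  sInf {n : ℕ | ∃ k : ℤ, k.natAbs = n ∧ t₂ = t₁ + (k : ZMod L)}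

/-!
Let `v` be a geodesic from `a₁` to `c`, let `(J, K)` be a minimal pair of indices with
`dist(u_J, v_K) ≤ ⌊x⌋`, and join `u_J` to `v_K` by a geodesic bridge. The cycle
`a₁ → b → u_J → v_K → a₁` has length at least `2 dist(a₁, b) - ⌊x⌋`, and any two of its points at
distance `δ ≤ ⌊x⌋` are at most `3δ` apart along it: inside a side by geodesicity, between `[a₁, b]`
and `[b, u_J]` because `[a, b]` is perpendicular to `[b, c]`, between `[a₁, b]` and `[a₁, v_K]`
because `a₁` is closest to `c`, near the bridge by minimality of `(J, K)`; and `[a₁, b]` never comes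
that close to the bridge, since `dist(a₁, b) > 3⌊x⌋`.
-/

open SimpleGraph

lemma exists_minimal_pair_le {P : ℕ → ℕ → Prop} {n m : ℕ} (h : P n m) :
    ∃ J ≤ n, ∃ K ≤ m, P J K ∧ ∀ j ≤ J, ∀ k ≤ K, P j k → j = J ∧ k = K := by
  obtain ⟨⟨J, K⟩, ⟨⟨hJ, hK⟩, hP⟩, hmin⟩ := wellFounded_lt.has_min
    {q : ℕ × ℕ | q ≤ (n, m) ∧ P q.1 q.2} ⟨(n, m), le_rfl, h⟩
  refine ⟨J, hJ, K, hK, hP, fun j hj k hk hjk => ?_⟩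
  have hle : (j, k) ≤ (J, K) := ⟨hj, hk⟩
  have := hmin (j, k) ⟨hle.trans ⟨hJ, hK⟩, hjk⟩
  have := eq_of_le_of_not_lt hle this
  simp_all

lemma zdist_comm (L : ℕ) (t₁ t₂ : ZMod L) : zdist L t₁ t₂ = zdist L t₂ t₁ := by
  unfold zdist
  congr 1
  ext n
  constructor <;> rintro ⟨k, hk, he⟩ <;>
    exact ⟨-k, by simpa using hk, by rw [he]; push_cast; ring⟩

lemma zdist_le_min {L : ℕ} [NeZero L] {s t : ZMod L} (h : s.val ≤ t.val) :
    zdist L s t ≤ min (t.val - s.val) (L - (t.val - s.val)) := by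
  have ht := t.val_lt
  refine le_min (Nat.sInf_le ⟨(t.val : ℤ) - s.val, by omega, ?_⟩)
    (Nat.sInf_le ⟨(t.val : ℤ) - s.val - L, by omega, ?_⟩) <;>
  simp

namespace SimpleGraph

variable {V : Type*} {G : SimpleGraph V}

lemma dist_add_dist_le_three_mul {y b z : V} (hyb : G.Reachable y b)
    (h : G.dist y b ≤ G.dist y z) : G.dist y b + G.dist b z ≤ 3 * G.dist y z := by
  have := hyb.symm.dist_triangle_left z
  have : G.dist b y = G.dist y b := dist_comm
  omega

namespace Walk

section geodesic

variable {u v : V}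

lemma dist_getVert_getVert_of_length_eq_dist (p : G.Walk u v) (hp : p.length = G.dist u v)
    {m n : ℕ} (hmn : m ≤ n) (hn : n ≤ p.length) :
    G.dist (p.getVert m) (p.getVert n) = n - m := by
  have hsub := length_eq_dist_of_subwalk hp ((p.drop m).isSubwalk_take (n - m) |>.trans
    (p.isSubwalk_drop m))
  rw [take_length, drop_length, drop_getVert, Nat.add_sub_cancel' hmn] at hsub
  omega

lemma dist_start_getVert_of_length_eq_dist (p : G.Walk u v) (hp : p.length = G.dist u v)
    {n : ℕ} (hn : n ≤ p.length) : G.dist u (p.getVert n) = n := by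
  simpa using p.dist_getVert_getVert_of_length_eq_dist hp (Nat.zero_le n) hn

lemma dist_getVert_end_of_length_eq_dist (p : G.Walk u v) (hp : p.length = G.dist u v)
    {n : ℕ} (hn : n ≤ p.length) : G.dist (p.getVert n) v = p.length - n := by
  simpa using p.dist_getVert_getVert_of_length_eq_dist hp hn le_rfl

lemma dist_le_dist_of_mem_support (p : G.Walk u v) (hp : p.length = G.dist u v)
    {y z : V} (hy : y ∈ p.support) (hz : G.dist u v ≤ G.dist u z) :
    G.dist y v ≤ G.dist y z := by
  obtain ⟨n, rfl, hn⟩ := mem_support_iff_exists_getVert.mp hy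
  have := (p.take n).reachable.dist_triangle_left z
  rw [p.dist_start_getVert_of_length_eq_dist hp hn] at this
  rw [p.dist_getVert_end_of_length_eq_dist hp hn]
  omega

end geodesic

variable {a b y z : V} {X : ℕ}

/-- `P.length - j + l` is the distance from `P.getVert j` to `B.getVert l` along `P.append B`. -/
lemma sub_add_le_three_mul_dist_of_bridge (P : G.Walk a y) (hP : P.length = G.dist a y)
    (B : G.Walk y z) (hB : B.length = G.dist y z) (hBX : B.length ≤ X)
    (hmin : ∀ j ≤ P.length, G.dist (P.getVert j) z ≤ X → j = P.length)
    {j l : ℕ} (hj : j ≤ P.length) (hl : l ≤ B.length)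
    (hδ : G.dist (P.getVert j) (B.getVert l) ≤ X) :
    P.length - j + l ≤ 3 * G.dist (P.getVert j) (B.getVert l) := by
  have hreach : G.Reachable (P.getVert j) (B.getVert l) :=
    (P.drop j).reachable.trans (B.take l).reachable
  have hstart : G.dist y (B.getVert l) = l := B.dist_start_getVert_of_length_eq_dist hB hl
  by_cases hclose : G.dist (P.getVert j) z ≤ X
  · obtain rfl := hmin j hj hclose
    rw [P.getVert_length, hstart]
    omega
  · have hz := hreach.dist_triangle_left z
    have hy := hreach.dist_triangle_left y
    rw [B.dist_getVert_end_of_length_eq_dist hB hl] at hz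
    rw [dist_comm (u := B.getVert l), hstart,
      P.dist_getVert_end_of_length_eq_dist hP hj] at hy
    omega

lemma sub_add_sub_le_three_mul_dist_of_bridge (B : G.Walk y z) (hB : B.length = G.dist y z)
    (hBX : B.length ≤ X) (Q : G.Walk a z) (hQ : Q.length = G.dist a z)
    (hmin : ∀ k ≤ Q.length, G.dist (Q.getVert k) y ≤ X → k = Q.length)
    {l k : ℕ} (hl : l ≤ B.length) (hk : k ≤ Q.length)
    (hδ : G.dist (B.getVert l) (Q.getVert k) ≤ X) :
    B.length - l + (Q.length - k) ≤ 3 * G.dist (B.getVert l) (Q.getVert k) := by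
  have hrev : B.reverse.getVert (B.length - l) = B.getVert l := by
    rw [getVert_reverse, Nat.sub_sub_self hl]
  rw [dist_comm, ← hrev] at hδ ⊢
  have := Q.sub_add_le_three_mul_dist_of_bridge hQ B.reverse
    (by rw [length_reverse, hB, dist_comm]) (by rwa [length_reverse]) hmin hk
    (by rw [length_reverse]; omega) hδ
  omega

def quadCycle (W : G.Walk a b) (P : G.Walk b y) (B : G.Walk y z) (Q : G.Walk a z) :
    G.Walk a a :=
  W.append (P.append (B.append Q.reverse))

section quadCycle

variable (W : G.Walk a b) (P : G.Walk b y) (B : G.Walk y z) (Q : G.Walk a z)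

@[simp]
lemma length_quadCycle :
    (quadCycle W P B Q).length = W.length + P.length + B.length + Q.length := by
  simp [quadCycle]
  omega

lemma getVert_quadCycle {t : ℕ} (ht : t < (quadCycle W P B Q).length) :
    (t < W.length ∧ (quadCycle W P B Q).getVert t = W.getVert t) ∨
    (W.length ≤ t ∧ t < W.length + P.length ∧
      (quadCycle W P B Q).getVert t = P.getVert (t - W.length)) ∨
    (W.length + P.length ≤ t ∧ t < W.length + P.length + B.length ∧
      (quadCycle W P B Q).getVert t = B.getVert (t - W.length - P.length)) ∨
    (W.length + P.length + B.length ≤ t ∧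
      (quadCycle W P B Q).getVert t = Q.getVert ((quadCycle W P B Q).length - t)) := by
  simp only [length_quadCycle] at ht ⊢
  simp only [quadCycle, getVert_append, getVert_reverse]
  split_ifs
  · exact .inl ⟨by omega, rfl⟩
  · exact .inr <| .inl ⟨by omega, by omega, rfl⟩
  · exact .inr <| .inr <| .inl ⟨by omega, by omega, rfl⟩
  · exact .inr <| .inr <| .inr ⟨by omega, by congr 1; omega⟩

/-- In the theorem, `W = [a₁, b]`, `P ⊆ [b, c]`, `Q ⊆ [a₁, c]`, and `P`, `Q` end at a minimal
pair of `X`-close points, joined by the geodesic `B`. -/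
structure IsGeodesicQuad (X : ℕ) : Prop where
  length_W : W.length = G.dist a b
  length_P : P.length = G.dist b y
  length_B : B.length = G.dist y z
  length_Q : Q.length = G.dist a z
  length_B_le : B.length ≤ X
  three_mul_lt_length_W : 3 * X < W.length
  perp : ∀ i j, G.dist (W.getVert i) b ≤ G.dist (W.getVert i) (P.getVert j)
  nearest : ∀ k i, G.dist (Q.getVert k) a ≤ G.dist (Q.getVert k) (W.getVert i)
  minimal : ∀ j ≤ P.length, ∀ k ≤ Q.length, G.dist (P.getVert j) (Q.getVert k) ≤ X →
    j = P.length ∧ k = Q.length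

end quadCycle

namespace IsGeodesicQuad

variable {W : G.Walk a b} {P : G.Walk b y} {B : G.Walk y z} {Q : G.Walk a z}

lemma length_W_le (h : IsGeodesicQuad W P B Q X) : W.length ≤ Q.length + B.length := by
  have hay := h.perp 0 P.length
  have hayz := Q.reachable.dist_triangle_left y
  rw [getVert_zero, getVert_length, ← h.length_W] at hay
  rw [← h.length_Q, dist_comm (u := z), ← h.length_B] at hayz
  omega

lemma lt_dist_getVert_W_B (h : IsGeodesicQuad W P B Q X) (i : ℕ) {l : ℕ}
    (hl : l ≤ B.length) : X < G.dist (W.getVert i) (B.getVert l) := by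
  have hzW := h.nearest Q.length i
  have hzBW := (B.drop l).reachable.symm.dist_triangle_left (W.getVert i)
  rw [getVert_length, dist_comm (v := a), ← h.length_Q] at hzW
  rw [dist_comm (u := z) (v := B.getVert l), B.dist_getVert_end_of_length_eq_dist h.length_B hl,
    dist_comm (u := B.getVert l)] at hzBW
  have := h.length_W_le
  have := h.length_B_le
  have := h.three_mul_lt_length_W
  omega

theorem min_le_three_mul_dist_getVert (h : IsGeodesicQuad W P B Q X)
    {s t : ℕ} (hst : s ≤ t) (ht : t < (quadCycle W P B Q).length)
    (hδ : G.dist ((quadCycle W P B Q).getVert s) ((quadCycle W P B Q).getVert t) ≤ X) :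
    min (t - s) ((quadCycle W P B Q).length - (t - s)) ≤
      3 * G.dist ((quadCycle W P B Q).getVert s) ((quadCycle W P B Q).getVert t) := by
  have hPB : ∀ j ≤ P.length, G.dist (P.getVert j) z ≤ X → j = P.length := fun j hj hjz =>
    (h.minimal j hj Q.length le_rfl (by rwa [Q.getVert_length])).1
  have hQB : ∀ k ≤ Q.length, G.dist (Q.getVert k) y ≤ X → k = Q.length := fun k hk hky =>
    (h.minimal P.length le_rfl k hk (by rwa [P.getVert_length, dist_comm])).2
  rcases getVert_quadCycle W P B Q (hst.trans_lt ht) with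
    ⟨hs, hqs⟩ | ⟨hs₁, hs₂, hqs⟩ | ⟨hs₁, hs₂, hqs⟩ | ⟨hs, hqs⟩ <;>
  rcases getVert_quadCycle W P B Q ht with
    ⟨ht₁, hqt⟩ | ⟨ht₁, ht₂, hqt⟩ | ⟨ht₁, ht₂, hqt⟩ | ⟨ht₁, hqt⟩ <;>
  rw [hqs, hqt] at hδ ⊢ <;> simp only [length_quadCycle] at ht hqt hδ ⊢ <;> try omega
  -- the sides of `s` and `t` are, in order: WW, WP, WB, WQ, PP, PB, PQ, BB, BQ, QQ
  · have := W.dist_getVert_getVert_of_length_eq_dist h.length_W hst ht₁.le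
    omega
  · have hsum := dist_add_dist_le_three_mul (W.drop s).reachable (h.perp s (t - W.length))
    rw [W.dist_getVert_end_of_length_eq_dist h.length_W hs.le,
      P.dist_start_getVert_of_length_eq_dist h.length_P (by omega)] at hsum
    omega
  · exact absurd hδ (h.lt_dist_getVert_W_B s (by omega)).not_ge
  · have hsum := dist_add_dist_le_three_mul (Q.take _).reachable.symm
      (h.nearest (W.length + P.length + B.length + Q.length - t) s)
    rw [dist_comm (v := a), Q.dist_start_getVert_of_length_eq_dist h.length_Q (by omega),
      W.dist_start_getVert_of_length_eq_dist h.length_W hs.le,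
      dist_comm (u := Q.getVert _)] at hsum
    omega
  · have := P.dist_getVert_getVert_of_length_eq_dist h.length_P
      (Nat.sub_le_sub_right hst W.length) (by omega)
    omega
  · have := P.sub_add_le_three_mul_dist_of_bridge h.length_P B h.length_B h.length_B_le hPB
      (by omega) (by omega) hδ
    omega
  · have := h.minimal _ (by omega) _ (by omega) hδ
    omega
  · have := B.dist_getVert_getVert_of_length_eq_dist h.length_B
      (Nat.sub_le_sub_right (Nat.sub_le_sub_right hst W.length) P.length) (by omega)
    omega
  · have := B.sub_add_sub_le_three_mul_dist_of_bridge h.length_B h.length_B_le Q h.length_Q hQB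
      (by omega) (by omega) hδ
    omega
  · have := Q.dist_getVert_getVert_of_length_eq_dist h.length_Q
      (Nat.sub_le_sub_left hst (W.length + P.length + B.length + Q.length)) (by omega)
    rw [dist_comm] at this
    omega

end IsGeodesicQuad

section closed

variable {v : V} {K : ℕ}

lemma getVert_val_add_one (q : G.Walk v v) [NeZero q.length] (t : ZMod q.length) :
    q.getVert (t + 1).val = q.getVert (t.val + 1) := by
  rw [ZMod.val_add, ZMod.val_one_eq_one_mod, Nat.add_mod_mod]
  rcases Nat.lt_or_ge (t.val + 1) q.length with h | h
  · rw [Nat.mod_eq_of_lt h]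
  · rw [show t.val + 1 = q.length by have := t.val_lt; omega, Nat.mod_self, getVert_zero,
      getVert_length]

lemma injective_getVert_val (q : G.Walk v v) [NeZero q.length]
    (hchord : ∀ s t, s ≤ t → t < q.length → G.dist (q.getVert s) (q.getVert t) ≤ X →
      min (t - s) (q.length - (t - s)) ≤ K * G.dist (q.getVert s) (q.getVert t)) :
    Function.Injective fun t : ZMod q.length => q.getVert t.val := by
  intro t₁ t₂ (h : q.getVert t₁.val = q.getVert t₂.val)
  wlog hle : t₁.val ≤ t₂.val generalizing t₁ t₂
  · exact (this h.symm (by omega)).symm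
  have := hchord _ _ hle t₂.val_lt (by rw [h, dist_self]; exact Nat.zero_le X)
  rw [h, dist_self, mul_zero] at this
  exact ZMod.val_injective _ (by have := t₂.val_lt; omega)

lemma zdist_le_mul_dist_getVert_val (q : G.Walk v v) [NeZero q.length]
    (hchord : ∀ s t, s ≤ t → t < q.length → G.dist (q.getVert s) (q.getVert t) ≤ X →
      min (t - s) (q.length - (t - s)) ≤ K * G.dist (q.getVert s) (q.getVert t))
    {t₁ t₂ : ZMod q.length} (h : G.dist (q.getVert t₁.val) (q.getVert t₂.val) ≤ X) :
    zdist q.length t₁ t₂ ≤ K * G.dist (q.getVert t₁.val) (q.getVert t₂.val) := by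
  wlog hle : t₁.val ≤ t₂.val generalizing t₁ t₂
  · rw [zdist_comm, dist_comm]
    exact this (by rwa [dist_comm]) (by omega)
  exact (zdist_le_min hle).trans (hchord _ _ hle t₂.val_lt h)

end closed

end Walk

open Walk in
theorem exists_closed_walk_min_le_three_mul_dist (X : ℕ) {a b c a₁ : V}
    (w : G.Walk a b) (hw : w.length = G.dist a b) (u : G.Walk b c) (hu : u.length = G.dist b c)
    (hperp : ∀ p ∈ u.support, G.dist a b ≤ G.dist a p) (ha₁ : a₁ ∈ w.support)
    (hclosest : ∀ p ∈ w.support, G.dist a₁ c ≤ G.dist p c) (hlong : 3 * X < G.dist a₁ b) :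
    ∃ q : G.Walk a₁ a₁, 2 * G.dist a₁ b ≤ q.length + X ∧
      ∀ s t, s ≤ t → t < q.length → G.dist (q.getVert s) (q.getVert t) ≤ X →
        min (t - s) (q.length - (t - s)) ≤ 3 * G.dist (q.getVert s) (q.getVert t) := by
  classical
  set W := w.dropUntil a₁ ha₁
  have hW : W.length = G.dist a₁ b := length_eq_dist_of_subwalk hw (w.isSubwalk_dropUntil ha₁)
  have hWw : ∀ i, W.getVert i ∈ w.support := fun i =>
    (w.isSubwalk_dropUntil ha₁).support_subset (W.getVert_mem_support i)
  obtain ⟨Q₀, hQ₀⟩ := (W.append u).reachable.exists_walk_length_eq_dist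
  obtain ⟨J, hJ, K, hK, hJK, hmin⟩ := exists_minimal_pair_le
    (P := fun j k => G.dist (u.getVert j) (Q₀.getVert k) ≤ X) (n := u.length) (m := Q₀.length)
    (by simp)
  obtain ⟨B, hB⟩ :=
    ((u.drop J).reachable.trans (Q₀.drop K).reachable.symm).exists_walk_length_eq_dist
  have hquad : IsGeodesicQuad W (u.take J) B (Q₀.take K) X :=
    { length_W := hW
      length_P := length_eq_dist_of_subwalk hu (u.isSubwalk_take J)
      length_B := hB
      length_Q := length_eq_dist_of_subwalk hQ₀ (Q₀.isSubwalk_take K)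
      length_B_le := hB ▸ hJK
      three_mul_lt_length_W := hW ▸ hlong
      perp := fun i j => w.dist_le_dist_of_mem_support hw (hWw i)
        (hperp _ ((u.isSubwalk_take J).support_subset ((u.take J).getVert_mem_support j)))
      nearest := fun k i => Q₀.reverse.dist_le_dist_of_mem_support
        (by rw [length_reverse, hQ₀, dist_comm])
        (by rw [support_reverse, List.mem_reverse]
            exact (Q₀.isSubwalk_take K).support_subset ((Q₀.take K).getVert_mem_support k))
        (by rw [dist_comm, dist_comm (u := c)]; exact hclosest _ (hWw i))
      minimal := fun j hj k hk hδ => by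
        simp only [take_length, take_getVert] at hj hk hδ ⊢
        rw [min_eq_right (by omega), min_eq_right (by omega)] at hδ
        have := hmin j (by omega) k (by omega) hδ
        omega }
  refine ⟨quadCycle W (u.take J) B (Q₀.take K), ?_,
    fun s t hst ht hδ => hquad.min_le_three_mul_dist_getVert hst ht hδ⟩
  have := hquad.length_W_le
  have := hquad.length_B_le
  simp only [length_quadCycle]
  omega

end SimpleGraph

lemma mem_union_inv_of_cayley_adj {Γ : Type*} [Group Γ] {S : Finset Γ} {g h : Γ}
    (hadj : (cayley S).Adj g h) : g⁻¹ * h ∈ (S : Set Γ) ∪ (S : Set Γ)⁻¹ := by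
  rcases hadj.2 with hS | hS
  · exact .inl hS
  · exact .inr (by simpa using hS)

lemma isCyclicPath_getVert_val {Γ : Type*} [Group Γ] {S : Finset Γ} {v : Γ}
    (q : (cayley S).Walk v v) [NeZero q.length] :
    IsCyclicPath S q.length fun t => q.getVert t.val := fun t =>
  mem_union_inv_of_cayley_adj <| by
    simpa only [q.getVert_val_add_one] using q.adj_getVert_succ t.val_lt

/-- Let `w` be a geodesic walk from `a` to `b` and `u` a geodesic walk
from `b` to `c` with `[a,b]` a perpendicular to `[b,c]`; let `a₁` be a vertex of `w`
closest to `c`.  If `dist(a₁,b) > 2·C·D·x` (with `D ≥ 1`, `C > 20`, `x ≥ 1`), then there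
is an injective cyclic path of length `L > 2·D·C·x` satisfying the bilipschitz-type
condition. -/
theorem coexact_stmt_8 {Γ : Type*} [Group Γ] (S : Finset Γ)
    (D : ℕ) (hD : 1 ≤ D) (C x : ℝ) (hC : 20 < C) (hx : 1 ≤ x)
    (a b c : Γ)
    (w : (cayley S).Walk a b) (hw : w.length = (cayley S).dist a b)
    (u : (cayley S).Walk b c) (hu : u.length = (cayley S).dist b c)
    (hperp : ∀ p ∈ u.support, (cayley S).dist a b ≤ (cayley S).dist a p)
    (a₁ : Γ) (ha₁ : a₁ ∈ w.support)
    (hclosest : ∀ p ∈ w.support, (cayley S).dist a₁ c ≤ (cayley S).dist p c)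
    (hlong : 2 * C * (D : ℝ) * x < ((cayley S).dist a₁ b : ℝ)) :
    ∃ L : ℕ, 2 * (D : ℝ) * C * x < (L : ℝ) ∧
    ∃ γ : ZMod L → Γ, Function.Injective γ ∧ IsCyclicPath S L γ ∧
      ∀ t₁ t₂ : ZMod L, ((cayley S).dist (γ t₁) (γ t₂) : ℝ) ≤ x →
        (zdist L t₁ t₂ : ℝ) ≤ C * x := by
  have hx₀ : 0 ≤ x := by linarith
  have hXx : (⌊x⌋₊ : ℝ) ≤ x := Nat.floor_le hx₀
  have hCDx : 20 * x ≤ C * D * x :=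
    mul_le_mul_of_nonneg_right (by nlinarith [(Nat.one_le_cast (α := ℝ)).mpr hD]) hx₀
  have hlongX : 3 * ⌊x⌋₊ < (cayley S).dist a₁ b := by
    exact_mod_cast (by linarith : (3 * ⌊x⌋₊ : ℝ) < (cayley S).dist a₁ b)
  obtain ⟨q, hlen, hchord⟩ :=
    exists_closed_walk_min_le_three_mul_dist ⌊x⌋₊ w hw u hu hperp ha₁ hclosest hlongX
  have : NeZero q.length := ⟨by omega⟩
  refine ⟨q.length, ?_, _, q.injective_getVert_val hchord, isCyclicPath_getVert_val q,
    fun t₁ t₂ hδ => ?_⟩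
  · have : (2 * (cayley S).dist a₁ b : ℝ) ≤ q.length + ⌊x⌋₊ := by exact_mod_cast hlen
    linarith
  · have hCx : 3 * x ≤ C * x := mul_le_mul_of_nonneg_right (by linarith) hx₀
    have := q.zdist_le_mul_dist_getVert_val hchord (Nat.le_floor hδ)
    have : (zdist q.length t₁ t₂ : ℝ) ≤
        3 * (cayley S).dist (q.getVert t₁.val) (q.getVert t₂.val) := by
      exact_mod_cast this
    linarith
end

section
/- For all real numbers a, b with 0 < a ≤ b, there exist a constant K ≥ 0 and a constant c ∈ (0,1) such that for every n ∈ ℕ there is a real polynomial P with degree at most n satisfying |P(t) − 1/t| ≤ K·cⁿ for every t ∈ [a,b]. -/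
/-!
Expanding `1 / t = b⁻¹ / (1 - (1 - t / b))` as a geometric series in `1 - t / b` and truncating
after `n + 1` terms gives a polynomial of degree `n` whose error is exactly
`-(1 - t / b) ^ (n + 1) / t`. On `[a, b]` the ratio `1 - t / b` lies in `[0, 1 - a / b]`, so the
error decays geometrically; the ratio `c = 1 - a / (2 * b)` is used instead of `1 - a / b`
because the latter vanishes when `a = b`.
-/

open Polynomial Finset

namespace Polynomial

variable {K : Type*} [Field K]

noncomputable def invApprox (b : K) (n : ℕ) : K[X] :=
  C b⁻¹ * ∑ k ∈ range (n + 1), (1 - C b⁻¹ * X) ^ k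

theorem natDegree_invApprox_le (b : K) (n : ℕ) : (invApprox b n).natDegree ≤ n := by
  have hlin : (1 - C b⁻¹ * X : K[X]).natDegree ≤ 1 :=
    natDegree_sub_le_of_le (natDegree_one.trans_le zero_le_one)
      ((natDegree_C_mul_le _ _).trans natDegree_X_le)
  refine (natDegree_C_mul_le _ _).trans (natDegree_sum_le_of_forall_le _ _ fun k hk => ?_)
  exact natDegree_pow_le_of_le k hlin |>.trans (by simpa [Nat.lt_succ_iff] using hk)

theorem eval_invApprox_mul (b t : K) (n : ℕ) :
    (invApprox b n).eval t * t = 1 - (1 - t / b) ^ (n + 1) := by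
  have hgeom := geom_sum_mul (1 - b⁻¹ * t) (n + 1)
  simp only [invApprox, eval_mul, eval_C, eval_finsetSum, eval_pow, eval_sub, eval_one, eval_X]
  linear_combination -hgeom

theorem eval_invApprox_sub_inv (b : K) {t : K} (ht : t ≠ 0) (n : ℕ) :
    (invApprox b n).eval t - 1 / t = -(1 - t / b) ^ (n + 1) / t := by
  rw [eq_div_iff ht, sub_mul, eval_invApprox_mul, one_div_mul_cancel ht]
  ring

end Polynomial

theorem abs_eval_invApprox_sub_inv_le {a b t : ℝ} (ha : 0 < a) (ht : t ∈ Set.Icc a b) (n : ℕ) :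
    |(invApprox b n).eval t - 1 / t| ≤ a⁻¹ * (1 - a / b) ^ (n + 1) := by
  obtain ⟨hat, htb⟩ := ht
  have ht0 : 0 < t := ha.trans_le hat
  have hb : 0 < b := ht0.trans_le htb
  have hratio : 0 ≤ 1 - t / b := sub_nonneg.2 ((div_le_one hb).2 htb)
  rw [eval_invApprox_sub_inv b ht0.ne', abs_div, abs_neg, abs_of_pos ht0,
    abs_of_nonneg (pow_nonneg hratio _), div_eq_inv_mul]
  gcongr

/-- For `0 < a ≤ b` there are `K ≥ 0` and `c ∈ (0,1)` such that for
every `n` there is a real polynomial `P` of degree at most `n` with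
`|P(t) − 1/t| ≤ K·cⁿ` on `[a,b]`. -/
theorem coexact_stmt_9 (a b : ℝ) (ha : 0 < a) (hab : a ≤ b) :
    ∃ K : ℝ, 0 ≤ K ∧ ∃ c ∈ Set.Ioo (0 : ℝ) 1, ∀ n : ℕ, ∃ P : Polynomial ℝ,
      P.natDegree ≤ n ∧ ∀ t ∈ Set.Icc a b, |P.eval t - 1 / t| ≤ K * c ^ n := by
  have hb : 0 < b := ha.trans_le hab
  have hratio : 0 ≤ 1 - a / b := sub_nonneg.2 ((div_le_one hb).2 hab)
  have hratio_le : 1 - a / b ≤ 1 - a / (2 * b) := by gcongr; linarith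
  have hc : 1 - a / (2 * b) ∈ Set.Ioo (0 : ℝ) 1 := by
    constructor
    · rw [sub_pos, div_lt_one (by positivity)]; linarith
    · have : 0 < a / (2 * b) := by positivity
      linarith
  refine ⟨a⁻¹, by positivity, _, hc, fun n => ⟨invApprox b n, natDegree_invApprox_le b n,
    fun t ht => (abs_eval_invApprox_sub_inv_le ha ht n).trans ?_⟩⟩
  gcongr
  calc (1 - a / b) ^ (n + 1) ≤ (1 - a / b) ^ n :=
        pow_le_pow_of_le_one hratio (by linarith [div_pos ha hb]) n.le_succ
    _ ≤ _ := pow_le_pow_left₀ hratio hratio_le n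
end

section
/- Let H be a complex Hilbert space and let A : H → H be a bounded self-adjoint operator whose spectrum is contained in the real interval [a,b] with 0 < a ≤ b. Then A is invertible, and there exist a constant K ≥ 0 and a constant c ∈ (0,1) such that for every n ∈ ℕ there is a real polynomial P of degree at most n with ‖P(A) − A⁻¹‖ ≤ K·cⁿ, where P(A) denotes the evaluation of P at A (polynomial functional calculus) and ‖·‖ the operator norm. -/
/-!
Write `q(t) = 1 - t / b`, so that `0 ≤ q ≤ 1 - a / b < 1` on `[a, b]`. The truncated Neumann
series `P_n(t) = b⁻¹ ∑_{k ≤ n} q(t)^k` satisfies `t · P_n(t) = 1 - q(t)^(n+1)`, hence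
`|P_n(t) - t⁻¹| ≤ a⁻¹ (1 - a / b)^(n+1)` uniformly on `[a, b]`. For a self-adjoint operator both
`P_n(A)` and `A⁻¹` are obtained from the continuous functional calculus, which is isometric, so
the scalar bound on the spectrum transfers to the operator norm.
-/

open Polynomial Finset

noncomputable def neumannInvApprox (b : ℝ) (n : ℕ) : ℝ[X] :=
  C b⁻¹ * ∑ k ∈ range (n + 1), (1 - C b⁻¹ * X) ^ k

theorem natDegree_neumannInvApprox_le (b : ℝ) (n : ℕ) :
    (neumannInvApprox b n).natDegree ≤ n := by
  have hlin : (1 - C b⁻¹ * X : ℝ[X]).natDegree ≤ 1 :=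
    (natDegree_sub_le _ _).trans <|
      max_le (by simp) ((natDegree_C_mul_le _ _).trans_eq natDegree_X)
  refine (natDegree_C_mul_le _ _).trans <| natDegree_sum_le_of_forall_le _ _ fun k hk => ?_
  calc ((1 - C b⁻¹ * X) ^ k).natDegree ≤ k * 1 := natDegree_pow_le_of_le k hlin
    _ ≤ n := by simpa [Nat.lt_succ_iff] using hk

theorem mul_eval_neumannInvApprox (b t : ℝ) (n : ℕ) :
    t * (neumannInvApprox b n).eval t = 1 - (1 - t / b) ^ (n + 1) := by
  have hfactor : t * b⁻¹ = 1 - (1 - b⁻¹ * t) := by ring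
  simp only [neumannInvApprox, eval_mul, eval_C, eval_finsetSum, eval_pow, eval_sub, eval_one,
    eval_X, ← mul_assoc, hfactor, mul_neg_geom_sum]
  ring

theorem abs_eval_neumannInvApprox_sub_inv_le {a b t : ℝ} (ha : 0 < a) (ht : t ∈ Set.Icc a b)
    (n : ℕ) : |(neumannInvApprox b n).eval t - t⁻¹| ≤ a⁻¹ * (1 - a / b) ^ (n + 1) := by
  have htpos : 0 < t := ha.trans_le ht.1
  have hb : 0 < b := htpos.trans_le ht.2
  have hq : 0 ≤ 1 - t / b := sub_nonneg.2 ((div_le_one hb).2 ht.2)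
  have herror : (neumannInvApprox b n).eval t - t⁻¹ = -(t⁻¹ * (1 - t / b) ^ (n + 1)) := by
    rw [← inv_mul_cancel_left₀ htpos.ne' ((neumannInvApprox b n).eval t),
      mul_eval_neumannInvApprox]
    ring
  rw [herror, abs_neg, abs_of_nonneg (by positivity)]
  gcongr
  all_goals exact ht.1

theorem norm_aeval_sub_ringInverse_le {A : Type*} [CStarAlgebra A] {a : A}
    (ha : IsSelfAdjoint a) (ha_unit : IsUnit a) (p : ℝ[X]) {ε : ℝ} (hε : 0 ≤ ε)
    (hp : ∀ t ∈ spectrum ℝ a, |p.eval t - t⁻¹| ≤ ε) :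
    ‖aeval a p - Ring.inverse a‖ ≤ ε := by
  have hinv : ContinuousOn (fun t : ℝ => t⁻¹) (spectrum ℝ a) :=
    continuousOn_inv₀.mono fun t ht h => spectrum.zero_notMem ℝ ha_unit (h ▸ ht)
  rw [← cfc_polynomial p a, ← cfc_ringInverse_id (R := ℝ) a ha_unit, ← cfc_sub _ _ a (hg := hinv)]
  exact norm_cfc_le hε hp

theorem spectrum_real_subset_of_subset_ofReal_image {A : Type*} [Ring A] [Algebra ℂ A] {a : A}
    {s : Set ℝ} (h : spectrum ℂ a ⊆ (fun t : ℝ => (t : ℂ)) '' s) : spectrum ℝ a ⊆ s := by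
  intro t ht
  rw [← spectrum.preimage_algebraMap ℂ] at ht
  obtain ⟨u, hu, hut⟩ := h ht
  rw [Complex.coe_algebraMap, Complex.ofReal_inj] at hut
  exact hut ▸ hu

/-- Let `A` be a bounded self-adjoint operator on a complex Hilbert
space whose spectrum is contained in `[a,b]` with `0 < a ≤ b`.  Then `A` is invertible,
and there are `K ≥ 0` and `c ∈ (0,1)` such that for every `n` there is a real polynomial
`P` of degree at most `n` with `‖P(A) − A⁻¹‖ ≤ K·cⁿ`. -/
theorem coexact_stmt_10 {H : Type*} [NormedAddCommGroup H] [InnerProductSpace ℂ H]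
    [CompleteSpace H] (A : H →L[ℂ] H) (hA : IsSelfAdjoint A)
    (a b : ℝ) (ha : 0 < a) (hab : a ≤ b)
    (hspec : spectrum ℂ A ⊆ (fun t : ℝ => (t : ℂ)) '' Set.Icc a b) :
    IsUnit A ∧ ∃ K : ℝ, 0 ≤ K ∧ ∃ c ∈ Set.Ioo (0 : ℝ) 1, ∀ n : ℕ, ∃ P : Polynomial ℝ,
      P.natDegree ≤ n ∧
        ‖Polynomial.aeval A (P.map (algebraMap ℝ ℂ)) - Ring.inverse A‖ ≤ K * c ^ n := by
  have hb : 0 < b := ha.trans_le hab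
  have hσ : spectrum ℝ A ⊆ Set.Icc a b := spectrum_real_subset_of_subset_ofReal_image hspec
  have hunit : IsUnit A := spectrum.isUnit_of_zero_notMem ℝ fun h => (hσ h).1.not_gt ha
  have hq : 0 ≤ 1 - a / b := sub_nonneg.2 ((div_le_one hb).2 hab)
  have hqc : 1 - a / b ≤ 1 - a / (2 * b) := by gcongr; linarith
  have hc : 1 - a / (2 * b) ∈ Set.Ioo (0 : ℝ) 1 := by
    constructor
    · rw [sub_pos, div_lt_one (by positivity)]; linarith
    · rw [sub_lt_self_iff]; exact div_pos ha (by linarith)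
  refine ⟨hunit, a⁻¹, by positivity, _, hc, fun n => ⟨neumannInvApprox b n,
    natDegree_neumannInvApprox_le b n, ?_⟩⟩
  rw [aeval_map_algebraMap]
  refine norm_aeval_sub_ringInverse_le hA hunit _
    (mul_nonneg (inv_nonneg.2 ha.le) (pow_nonneg hc.1.le n)) fun t ht => ?_
  calc |(neumannInvApprox b n).eval t - t⁻¹| ≤ a⁻¹ * (1 - a / b) ^ (n + 1) :=
        abs_eval_neumannInvApprox_sub_inv_le ha (hσ ht) n
    _ ≤ a⁻¹ * (1 - a / b) ^ n := by
        have hq1 : 1 - a / b ≤ 1 := sub_le_self _ (div_nonneg ha.le hb.le)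
        exact mul_le_mul_of_nonneg_left (pow_le_pow_of_le_one hq hq1 n.le_succ) (by positivity)
    _ ≤ a⁻¹ * (1 - a / (2 * b)) ^ n := by gcongr
end

section
/- Let m ≥ 1 and let f : ℤᵐ × Fin m → ℝ be finitely supported with ∂f = 0. Then the family of shifts {τ_u f}_{u∈ℤᵐ} is not a Riesz system in ℓ²(E): for every δ > 0 there exists a finitely supported a : ℤᵐ → ℝ with Σ_u a(u)² > 0 and ‖Σ_{u∈ℤᵐ} a(u)·τ_u f‖²_{ℓ²(E)} < δ·Σ_{u∈ℤᵐ} a(u)². -/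
/-- The `j`-th standard generator of `ℤᵐ`. -/
def latGen (m : ℕ) (j : Fin m) : Fin m → ℤ := Pi.single j 1

/-- The boundary of a 1-cochain `f` on the edge set `E = ℤᵐ × Fin m` of the standard
Cayley graph of `ℤᵐ` (the edge `(v,j)` going from `v` to `v + e_j`):
`∂f(v) = Σ_j (f(v − e_j, j) − f(v, j))`. -/
def latBdry (m : ℕ) (f : (Fin m → ℤ) × Fin m → ℝ) (v : Fin m → ℤ) : ℝ :=
  ∑ j : Fin m, (f (v - latGen m j, j) - f (v, j))

/-- The shift `τ_u f` of a 1-cochain by `u ∈ ℤᵐ`. -/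
def latShift (m : ℕ) (u : Fin m → ℤ) (f : (Fin m → ℤ) × Fin m → ℝ) :
    (Fin m → ℤ) × Fin m → ℝ :=
  fun e => f (e.1 - u, e.2)

/-!
Pairing `∂f = 0` with a coordinate function `v ↦ v_j` and summing by parts shows that every
slice `f(·, j)` of a closed finitely supported `f` has total sum zero. Take for `a` the indicator
of the box `[0, N)ᵐ`. Then `Σ_u a(u) τ_u f` vanishes far outside the box, and also deep inside
it, where the box covers a whole translate of the support of `f`; everywhere it is bounded by
`Σ |f|`. So its squared norm is at most a constant times `(N + 2R)ᵐ - (N - 2R)ᵐ = O(Nᵐ⁻¹)`,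
while `Σ a(u)² = Nᵐ`.
-/

open Finset Function Filter Topology

theorem Function.HasFiniteSupport.comp_sub_right {G M : Type*} [AddGroup G] [Zero M] {F : G → M}
    (hF : F.HasFiniteSupport) (e : G) : (fun v => F (v - e)).HasFiniteSupport :=
  hF.fun_comp_of_injective (sub_left_injective (b := e))

theorem finsum_mul_sub_comp_sub {G : Type*} [AddCommGroup G] {F : G → ℝ}
    (hF : F.HasFiniteSupport) (φ : G → ℝ) (e : G) :
    ∑ᶠ v, φ v * (F (v - e) - F v) = ∑ᶠ w, (φ (w + e) - φ w) * F w := by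
  have hshift : ∑ᶠ v, φ v * F (v - e) = ∑ᶠ w, φ (w + e) * F w := by
    simpa using (finsum_comp_equiv (Equiv.addRight e) (f := fun v => φ v * F (v - e))).symm
  simp only [mul_sub, sub_mul]
  rw [finsum_sub_distrib ((hF.comp_sub_right e).fun_mul_right φ) (hF.fun_mul_right φ),
    finsum_sub_distrib (hF.fun_mul_right _) (hF.fun_mul_right _), hshift]

theorem finsum_slice_eq_zero_of_latBdry_eq_zero {m : ℕ} {f : (Fin m → ℤ) × Fin m → ℝ}
    (hfin : f.HasFiniteSupport) (hclosed : ∀ v, latBdry m f v = 0) (j : Fin m) :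
    ∑ᶠ w, f (w, j) = 0 := by
  have hslice (k : Fin m) : (fun w => f (w, k)).HasFiniteSupport :=
    hfin.fun_comp_of_injective (Prod.mk_left_injective k)
  calc ∑ᶠ w, f (w, j)
      = ∑ k, ∑ᶠ w, ((((w + latGen m k) j : ℤ) : ℝ) - (w j : ℝ)) * f (w, k) := by
        rw [sum_eq_single j (fun k _ hkj => by simp [latGen, hkj.symm]) (by simp)]
        simp [latGen]
    _ = ∑ k, ∑ᶠ v, (v j : ℝ) * (f (v - latGen m k, k) - f (v, k)) := by
        simp only [finsum_mul_sub_comp_sub (hslice _)]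
    _ = ∑ᶠ v, (v j : ℝ) * latBdry m f v := by
        simp only [latBdry, mul_sum]
        exact (finsum_sum_comm _ _ fun k _ =>
          (((hslice k).comp_sub_right _).sub (hslice k)).fun_mul_right _).symm
    _ = 0 := by simp [hclosed]

theorem Finset.sum_le_finsum {α M : Type*} [AddCommMonoid M] [PartialOrder M]
    [IsOrderedAddMonoid M] {g : α → M} (hg : g.HasFiniteSupport) (hg0 : 0 ≤ g) (s : Finset α) :
    ∑ x ∈ s, g x ≤ ∑ᶠ x, g x := by
  classical
  rw [finsum_eq_sum_of_support_subset g (s := s ∪ hg.toFinset) fun x hx =>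
    mem_union_right _ ((Set.Finite.mem_toFinset hg).2 hx)]
  exact sum_le_sum_of_subset_of_nonneg subset_union_left fun x _ _ => hg0 x

noncomputable def latBox (m : ℕ) (a b : ℤ) : Finset (Fin m → ℤ) :=
  Fintype.piFinset fun _ => Finset.Ico a b

section LatBox

variable {m : ℕ}

theorem mem_latBox {a b : ℤ} {v : Fin m → ℤ} : v ∈ latBox m a b ↔ ∀ i, a ≤ v i ∧ v i < b := by
  simp [latBox]

theorem latBox_subset_latBox {a b a' b' : ℤ} (ha : a' ≤ a) (hb : b ≤ b') :
    latBox m a b ⊆ latBox m a' b' :=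
  Fintype.piFinset_subset _ _ fun _ => Finset.Ico_subset_Ico ha hb

theorem card_latBox {a b : ℤ} (hab : a ≤ b) : (#(latBox m a b) : ℝ) = ((b - a : ℤ) : ℝ) ^ m := by
  simp only [latBox, Fintype.card_piFinset, Int.card_Ico, prod_const, card_univ, Fintype.card_fin,
    Nat.cast_pow]
  rw [← Int.cast_natCast, Int.toNat_of_nonneg (sub_nonneg.2 hab)]

theorem exists_subset_latBox {s : Set (Fin m → ℤ)} (hs : s.Finite) :
    ∃ R : ℕ, s ⊆ latBox m (-R) R := by
  obtain ⟨R, hR⟩ := (hs.image fun v => ∑ i, (v i).natAbs).bddAbove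
  refine ⟨R + 1, fun v hv => mem_latBox.2 fun i => ?_⟩
  have : (v i).natAbs ≤ R :=
    (single_le_sum (fun i _ => Nat.zero_le _) (mem_univ i)).trans (hR ⟨v, hv, rfl⟩)
  omega

end LatBox

noncomputable def boxConv (m N : ℕ) (h : (Fin m → ℤ) → ℝ) (v : Fin m → ℤ) : ℝ :=
  ∑ u ∈ latBox m 0 N, h (v - u)

noncomputable def latShell (m R N : ℕ) : Finset (Fin m → ℤ) :=
  latBox m (-R) (N + R) \ latBox m R (N - R)

section BoxConv

variable {m R N : ℕ} {h : (Fin m → ℤ) → ℝ}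

theorem boxConv_eq_zero_of_mem_latBox (hR : h.support ⊆ latBox m (-R) R) (hsum : ∑ᶠ w, h w = 0)
    {v : Fin m → ℤ} (hv : v ∈ latBox m R (N - R)) : boxConv m N h v = 0 := by
  have hsupp : (fun u => h (v - u)).support ⊆ latBox m 0 N := fun u hu => by
    have hvu := mem_latBox.1 (hR hu)
    refine mem_latBox.2 fun i => ?_
    have := mem_latBox.1 hv i
    have := hvu i
    simp only [Pi.sub_apply] at *
    omega
  rw [boxConv, ← finsum_eq_sum_of_support_subset _ hsupp, ← hsum]
  exact finsum_comp_equiv (Equiv.subLeft v)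

theorem boxConv_eq_zero_of_notMem_latBox (hR : h.support ⊆ latBox m (-R) R) {v : Fin m → ℤ}
    (hv : v ∉ latBox m (-R) (N + R)) : boxConv m N h v = 0 := by
  refine sum_eq_zero fun u hu => by_contra fun hvu => hv (mem_latBox.2 fun i => ?_)
  have := mem_latBox.1 (hR hvu) i
  have := mem_latBox.1 hu i
  simp only [Pi.sub_apply] at *
  omega

theorem mem_latShell_of_boxConv_ne_zero (hR : h.support ⊆ latBox m (-R) R)
    (hsum : ∑ᶠ w, h w = 0) {v : Fin m → ℤ} (hv : boxConv m N h v ≠ 0) : v ∈ latShell m R N :=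
  mem_sdiff.2 ⟨not_not.1 (mt (boxConv_eq_zero_of_notMem_latBox hR) hv),
    mt (boxConv_eq_zero_of_mem_latBox hR hsum) hv⟩

theorem abs_boxConv_le (hh : h.HasFiniteSupport) (v : Fin m → ℤ) :
    |boxConv m N h v| ≤ ∑ᶠ w, |h w| :=
  calc |boxConv m N h v| ≤ ∑ u ∈ latBox m 0 N, |h (v - u)| := abs_sum_le_sum_abs _ _
    _ ≤ ∑ᶠ u, |h (v - u)| :=
      sum_le_finsum ((hh.fun_comp_of_injective (sub_right_injective (b := v))).fun_comp abs_zero)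
        (fun _ => abs_nonneg _) _
    _ = ∑ᶠ w, |h w| := finsum_comp_equiv (Equiv.subLeft v) (f := fun w => |h w|)

theorem sum_sq_boxConv_le (hh : h.HasFiniteSupport) (s : Finset (Fin m → ℤ)) :
    ∑ v ∈ s, boxConv m N h v ^ 2 ≤ #s * (∑ᶠ w, |h w|) ^ 2 := by
  refine (sum_le_card_nsmul _ _ _ fun v _ => ?_).trans_eq (nsmul_eq_mul _ _)
  exact sq_le_sq' (abs_le.1 (abs_boxConv_le hh v)).1 (abs_le.1 (abs_boxConv_le hh v)).2

theorem card_latShell (hRN : 2 * R ≤ N) :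
    (#(latShell m R N) : ℝ) = ((N : ℝ) + 2 * R) ^ m - ((N : ℝ) - 2 * R) ^ m := by
  have hsub : latBox m R (N - R) ⊆ latBox m (-R) (N + R) :=
    latBox_subset_latBox (by omega) (by omega)
  rw [latShell, card_sdiff_of_subset hsub, Nat.cast_sub (card_le_card hsub),
    card_latBox (by omega), card_latBox (by omega)]
  push_cast
  ring

end BoxConv

theorem tendsto_pow_add_sub_pow_sub_div_pow (m : ℕ) (c : ℝ) :
    Tendsto (fun x : ℝ => ((x + c) ^ m - (x - c) ^ m) / x ^ m) atTop (𝓝 0) := by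
  have hcx : Tendsto (fun x : ℝ => c / x) atTop (𝓝 0) := tendsto_const_nhds.div_atTop tendsto_id
  have hlim : Tendsto (fun x : ℝ => (1 + c / x) ^ m - (1 - c / x) ^ m) atTop (𝓝 0) := by
    simpa using ((tendsto_const_nhds (x := (1 : ℝ)).add hcx).pow m).sub
      ((tendsto_const_nhds (x := (1 : ℝ)).sub hcx).pow m)
  refine hlim.congr' ((eventually_ne_atTop 0).mono fun x hx => ?_)
  dsimp only
  rw [eq_comm, sub_div, ← div_pow, ← div_pow, add_div, sub_div, div_self hx]

theorem exists_nat_mul_pow_add_sub_pow_sub_lt (m R : ℕ) (C : ℝ) {δ : ℝ} (hδ : 0 < δ) :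
    ∃ N : ℕ, 2 * R < N ∧ C * (((N : ℝ) + 2 * R) ^ m - ((N : ℝ) - 2 * R) ^ m) < δ * N ^ m := by
  have hlim := ((tendsto_pow_add_sub_pow_sub_div_pow m (2 * R)).comp
    tendsto_natCast_atTop_atTop).const_mul C
  rw [mul_zero] at hlim
  obtain ⟨N, hRN, hN⟩ :=
    ((eventually_gt_atTop (2 * R)).and (hlim.eventually (gt_mem_nhds hδ))).exists
  refine ⟨N, hRN, ?_⟩
  have hN0 : (0 : ℝ) < (N : ℝ) ^ m := pow_pos (by exact_mod_cast (Nat.zero_le _).trans_lt hRN) m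
  rwa [Function.comp_apply, ← mul_div_assoc, div_lt_iff₀ hN0] at hN

theorem finsum_indicator_one_mul {α : Type*} (s : Finset α) (F : α → ℝ) :
    ∑ᶠ u, (s : Set α).indicator 1 u * F u = ∑ u ∈ s, F u := by
  rw [← finsum_mem_coe_finset, finsum_mem_def]
  congr 1 with u
  by_cases hu : u ∈ (s : Set α) <;> simp [hu]

theorem finsum_sq_indicator_latBox (m N : ℕ) :
    ∑ᶠ u, (latBox m 0 N : Set (Fin m → ℤ)).indicator (1 : (Fin m → ℤ) → ℝ) u ^ 2 =
      (N : ℝ) ^ m := by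
  simp only [sq, finsum_indicator_one_mul]
  rw [sum_congr rfl fun u hu => Set.indicator_of_mem (mem_coe.2 hu) 1]
  simp [card_latBox]

theorem tsum_sq_boxConv_slice {m R N : ℕ} {f : (Fin m → ℤ) × Fin m → ℝ}
    (hR : ∀ j, (fun w => f (w, j)).support ⊆ latBox m (-R) R)
    (hsum : ∀ j, ∑ᶠ w, f (w, j) = 0) :
    ∑' e : (Fin m → ℤ) × Fin m, boxConv m N (fun w => f (w, e.2)) e.1 ^ 2 =
      ∑ j, ∑ v ∈ latShell m R N, boxConv m N (fun w => f (w, j)) v ^ 2 := by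
  rw [tsum_eq_sum (s := latShell m R N ×ˢ univ) fun e he => ?_, sum_product_right]
  refine pow_eq_zero_iff two_ne_zero |>.2 (by_contra fun hne => he ?_)
  exact mem_product.2 ⟨mem_latShell_of_boxConv_ne_zero (hR _) (hsum _) hne, mem_univ _⟩

theorem coexact_stmt_12_general (m : ℕ) (f : (Fin m → ℤ) × Fin m → ℝ)
    (hfin : (Function.support f).Finite) (hclosed : ∀ v, latBdry m f v = 0) :
    ∀ δ : ℝ, 0 < δ → ∃ a : (Fin m → ℤ) → ℝ, (Function.support a).Finite ∧
      0 < ∑ᶠ u, a u ^ 2 ∧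
      ∑' e : (Fin m → ℤ) × Fin m, (∑ᶠ u, a u * latShift m u f e) ^ 2 <
        δ * ∑ᶠ u, a u ^ 2 := by
  intro δ hδ
  obtain ⟨R, hR⟩ := exists_subset_latBox (hfin.image Prod.fst)
  have hslice (j : Fin m) : (fun w => f (w, j)).support ⊆ latBox m (-R) R :=
    fun w hw => hR ⟨(w, j), hw, rfl⟩
  obtain ⟨N, hRN, hN⟩ :=
    exists_nat_mul_pow_add_sub_pow_sub_lt m R (∑ j, (∑ᶠ w, |f (w, j)|) ^ 2) hδ
  set a : (Fin m → ℤ) → ℝ := (latBox m 0 N : Set (Fin m → ℤ)).indicator 1 with ha_def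
  have ha : ∑ᶠ u, a u ^ 2 = (N : ℝ) ^ m := finsum_sq_indicator_latBox m N
  refine ⟨a, (latBox m 0 N).finite_toSet.subset (Set.support_indicator_subset), ?_, ?_⟩
  · rw [ha]
    exact pow_pos (by exact_mod_cast (Nat.zero_le _).trans_lt hRN) m
  calc ∑' e, (∑ᶠ u, a u * latShift m u f e) ^ 2
      = ∑ j, ∑ v ∈ latShell m R N, boxConv m N (fun w => f (w, j)) v ^ 2 := by
        simp only [ha_def, finsum_indicator_one_mul]
        exact tsum_sq_boxConv_slice hslice (finsum_slice_eq_zero_of_latBdry_eq_zero hfin hclosed)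
    _ ≤ ∑ j, #(latShell m R N) * (∑ᶠ w, |f (w, j)|) ^ 2 :=
        sum_le_sum fun j _ => sum_sq_boxConv_le
          (hfin.preimage (Prod.mk_left_injective j).injOn) _
    _ = (∑ j, (∑ᶠ w, |f (w, j)|) ^ 2) * (((N : ℝ) + 2 * R) ^ m - ((N : ℝ) - 2 * R) ^ m) := by
        rw [← mul_sum, card_latShell hRN.le, mul_comm]
    _ < δ * ∑ᶠ u, a u ^ 2 := ha ▸ hN

/-- For a finitely supported closed 1-cochain `f` on the standard
Cayley graph of `ℤᵐ`, the family of shifts `{τ_u f}` is not a Riesz system in `ℓ²(E)`: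
the lower Riesz bound fails for every `δ > 0`. -/
theorem coexact_stmt_12 (m : ℕ) (hm : 1 ≤ m) (f : (Fin m → ℤ) × Fin m → ℝ)
    (hfin : (Function.support f).Finite) (hclosed : ∀ v, latBdry m f v = 0) :
    ∀ δ : ℝ, 0 < δ → ∃ a : (Fin m → ℤ) → ℝ, (Function.support a).Finite ∧
      0 < ∑ᶠ u, a u ^ 2 ∧
      ∑' e : (Fin m → ℤ) × Fin m, (∑ᶠ u, a u * latShift m u f e) ^ 2 <
        δ * ∑ᶠ u, a u ^ 2 :=
  coexact_stmt_12_general m f hfin hclosed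
end
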